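/- arXiv:1702.05681 — 3 statements merged into one kernel-verified Lean document; each statement's English description precedes it below -/
import Mathlib

section
/- Let G be a connected simple graph on n vertices and let k be an integer with 3 ≤ k ≤ n-2. Then sdiam_k(G) ≤ n-2 if and only if G has at least k+1 non-cut vertices. -/
/-!
If some non-cut vertex `v` lies outside `S`, a spanning tree of `G - v` connects `S` with
`n - 2` edges. Conversely, when there are at most `k` non-cut vertices, put them all into a
`k`-set `S`. Every connected subgraph containing `S` then spans `G`: a maximal connected proper
vertex set containing a given one is the complement of a vertex `v` adjacent to it, and this `v`
is a non-cut vertex outside the given set. A connected spanning subgraph has at least `n - 1` edges.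
-/

open SimpleGraph

variable {V : Type*}

/-- The set of non-cut vertices of a graph: vertices whose deletion leaves the
graph (induced on the remaining vertices) connected. -/
def noncutVerts (G : SimpleGraph V) : Set V :=
  {v | (G.induce ({v}ᶜ : Set V)).Connected}

/-- The Steiner distance of a finite vertex set `S`: the minimum number of edges
of a connected subgraph of `G` whose vertex set contains `S`. -/
noncomputable def steinerDist [Fintype V] (G : SimpleGraph V) (S : Finset V) : ℕ :=
  sInf {m | ∃ H : G.Subgraph, H.Connected ∧ ↑S ⊆ H.verts ∧ H.edgeSet.ncard = m}

/-- The Steiner `k`-diameter of `G`: the maximum Steiner distance over all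
`k`-element subsets of the vertex set. -/
noncomputable def sdiam [Fintype V] (G : SimpleGraph V) (k : ℕ) : ℕ :=
  (Finset.powersetCard k (Finset.univ : Finset V)).sup (fun S => steinerDist G S)

namespace SimpleGraph

variable {G : SimpleGraph V}

namespace Subgraph

lemma ncard_edgeSet_coe (H : G.Subgraph) : H.coe.edgeSet.ncard = H.edgeSet.ncard := by
  rw [← image_coe_edgeSet_coe,
    Set.ncard_image_of_injective _ (Sym2.map.injective Subtype.val_injective)]

lemma Connected.ncard_verts_le_ncard_edgeSet_add_one [Finite V] {H : G.Subgraph}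
    (hH : H.Connected) : H.verts.ncard ≤ H.edgeSet.ncard + 1 := by
  have := (Subgraph.connected_iff'.mp hH).card_vert_le_card_edgeSet_add_one
  rwa [Nat.card_coe_set_eq, Nat.card_coe_set_eq, ncard_edgeSet_coe] at this

lemma Connected.exists_spanning_ncard_edgeSet_add_one_eq [Finite V] {H : G.Subgraph}
    (hH : H.Connected) : ∃ T : G.Subgraph,
      T.Connected ∧ T.verts = H.verts ∧ T.edgeSet.ncard + 1 = H.verts.ncard := by
  obtain ⟨T, hTH, hT⟩ := (Subgraph.connected_iff'.mp hH).exists_isTree_le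
  refine ⟨Subgraph.coeSubgraph (toSubgraph T hTH), (hT.connected.toSubgraph hTH).coeSubgraph,
    by simp, ?_⟩
  rw [Subgraph.edgeSet_map, Set.ncard_image_of_injective _ (Sym2.map.injective H.hom_injective)]
  exact (isTree_iff_connected_and_card.mp hT).2

end Subgraph

lemma Connected.exists_mem_noncutVerts_notMem [Finite V] (hG : G.Connected) {W : Set V}
    (hW : (G.induce W).Connected) (hWV : W ≠ Set.univ) : ∃ v ∉ W, v ∈ noncutVerts G := by
  obtain ⟨M, hWM, hM⟩ := Finite.exists_le_maximal
    (p := fun M : Set V ↦ (G.induce M).Connected ∧ M ≠ Set.univ) ⟨hW, hWV⟩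
  obtain ⟨⟨w, hw⟩⟩ := hM.prop.1.nonempty
  obtain ⟨u, hu⟩ := Set.nonempty_compl.mpr hM.prop.2
  obtain ⟨d, -, hfst, hsnd⟩ := (hG.preconnected w u).some.exists_boundary_dart M hw hu
  have hinsert : (G.induce (insert d.snd M)).Connected := by
    rw [← Set.union_singleton]
    exact connected_induce_union hM.prop.1.preconnected
      Preconnected.of_subsingleton hfst rfl d.adj
  have hM_eq : M = {d.snd}ᶜ := by
    have : insert d.snd M = Set.univ := by
      by_contra h
      exact hsnd (hM.mem_of_prop_insert ⟨hinsert, h⟩)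
    rw [← Set.insert_sdiff_self_of_notMem hsnd, this, Set.compl_eq_univ_sdiff]
  refine ⟨d.snd, fun h ↦ hsnd (hWM h), ?_⟩
  show (G.induce {d.snd}ᶜ).Connected
  exact hM_eq ▸ hM.prop.1

section Steiner

variable [Fintype V] {S : Finset V}

lemma steinerDist_le {H : G.Subgraph} (hH : H.Connected) (hS : ↑S ⊆ H.verts) :
    steinerDist G S ≤ H.edgeSet.ncard :=
  Nat.sInf_le ⟨H, hH, hS, rfl⟩

lemma le_steinerDist (hG : G.Connected) {m : ℕ}
    (h : ∀ H : G.Subgraph, H.Connected → ↑S ⊆ H.verts → m ≤ H.edgeSet.ncard) :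
    m ≤ steinerDist G S :=
  le_csInf ⟨_, _, hG.toSubgraph le_rfl, Set.subset_univ _, rfl⟩
    (by rintro _ ⟨H, hH, hSH, rfl⟩; exact h H hH hSH)

lemma Connected.card_sub_one_le_steinerDist (hG : G.Connected) (hS : noncutVerts G ⊆ S) :
    Fintype.card V - 1 ≤ steinerDist G S := by
  refine le_steinerDist hG fun H hH hSH ↦ ?_
  have hverts : H.verts = Set.univ := by
    by_contra hne
    obtain ⟨v, hvH, hv⟩ := hG.exists_mem_noncutVerts_notMem hH.induce_verts hne
    exact hvH (hSH (hS hv))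
  have := hH.ncard_verts_le_ncard_edgeSet_add_one
  rw [hverts, Set.ncard_univ, Nat.card_eq_fintype_card] at this
  omega

lemma steinerDist_le_card_sub_two {v : V} (hv : v ∈ noncutVerts G) (hvS : v ∉ S) :
    steinerDist G S ≤ Fintype.card V - 2 := by
  obtain ⟨H, hH, hHv, hHcard⟩ :=
    (connected_induce_iff.mp hv).exists_spanning_ncard_edgeSet_add_one_eq
  have := steinerDist_le hH ((Set.subset_compl_singleton_iff.mpr hvS).trans hHv.symm.subset)
  rw [Subgraph.induce_verts, Set.ncard_compl, Set.ncard_singleton,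
    Nat.card_eq_fintype_card] at hHcard
  omega

lemma sdiam_le_iff {k m : ℕ} :
    sdiam G k ≤ m ↔ ∀ S : Finset V, S.card = k → steinerDist G S ≤ m := by
  simp [sdiam, Finset.mem_powersetCard]

end Steiner

end SimpleGraph

theorem stmt_4 [Fintype V] (G : SimpleGraph V) (k : ℕ)
    (hk3 : 3 ≤ k) (hkn : k ≤ Fintype.card V - 2) (hG : G.Connected) :
    sdiam G k ≤ Fintype.card V - 2 ↔ k + 1 ≤ (noncutVerts G).ncard := by
  rw [sdiam_le_iff]
  constructor
  · intro h
    by_contra! hN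
    set N := (Set.toFinite (noncutVerts G)).toFinset
    obtain ⟨S, hNS, -, hS⟩ := Finset.exists_subsuperset_card_eq (Finset.subset_univ N)
      (by rwa [← Set.ncard_eq_toFinset_card, ← Nat.lt_add_one_iff])
      (by rw [Finset.card_univ]; omega)
    have := hG.card_sub_one_le_steinerDist (Set.Finite.toFinset_subset.mp hNS)
    have := h S hS
    omega
  · intro h S hS
    obtain ⟨v, hv, hvS⟩ := Set.exists_mem_notMem_of_ncard_lt_ncard
      (s := (S : Set V)) (t := noncutVerts G) (by rw [Set.ncard_coe_finset]; omega)
    exact steinerDist_le_card_sub_two hv hvS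
end

section
/- Let G be a connected simple graph on n ≥ 5 vertices. If sdiam_4(G) = 3, then the complement of G contains no 4-cycle as a subgraph. -/
open SimpleGraph

variable {V : Type*}

/-!
A connected graph on `k` vertices has at least `k - 1` edges. Hence a connected subgraph of `G`
with at most three edges that contains four vertices `u₁, u₂, u₃, u₄` spans exactly these
vertices and has three edges. But if `u₁u₂u₃u₄` is a 4-cycle of the complement, the only
possible edges of `G` among them are `u₁u₃` and `u₂u₄`.
-/

namespace SimpleGraph

theorem Subgraph.Connected.ncard_verts_le_ncard_edgeSet_add_one_s8 [Finite V] {G : SimpleGraph V}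
    {H : G.Subgraph} (hH : H.Connected) : H.verts.ncard ≤ H.edgeSet.ncard + 1 := by
  have := hH.coe.card_vert_le_card_edgeSet_add_one
  rw [Nat.card_coe_set_eq, Nat.card_coe_set_eq] at this
  rwa [← H.image_coe_edgeSet_coe,
    Set.ncard_image_of_injective _ (Sym2.map.injective Subtype.coe_injective)]

theorem Subgraph.Connected.verts_eq_of_ncard_edgeSet_lt [Finite V] {G : SimpleGraph V}
    {H : G.Subgraph} (hH : H.Connected) {S : Finset V} (hS : ↑S ⊆ H.verts)
    (hcard : H.edgeSet.ncard < S.card) : H.verts = S := by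
  refine (Set.eq_of_subset_of_ncard_le hS ?_ (Set.toFinite _)).symm
  have := hH.ncard_verts_le_ncard_edgeSet_add_one_s8
  rw [Set.ncard_coe_finset]
  omega

theorem Subgraph.edgeSet_subset_of_verts_subset_of_not_adj {G : SimpleGraph V} {H : G.Subgraph}
    {u₁ u₂ u₃ u₄ : V} (hV : H.verts ⊆ {u₁, u₂, u₃, u₄})
    (h₁₂ : ¬ G.Adj u₁ u₂) (h₂₃ : ¬ G.Adj u₂ u₃) (h₃₄ : ¬ G.Adj u₃ u₄) (h₄₁ : ¬ G.Adj u₄ u₁) :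
    H.edgeSet ⊆ {s(u₁, u₃), s(u₂, u₄)} := by
  rintro ⟨a, b⟩ hab
  have hG : G.Adj a b := H.adj_sub hab
  have ha := hV (H.edge_vert hab)
  have hb := hV (H.edge_vert hab.symm)
  simp only [Set.mem_insert_iff, Set.mem_singleton_iff] at ha hb
  rcases ha with rfl | rfl | rfl | rfl <;> rcases hb with rfl | rfl | rfl | rfl <;>
    simp_all [G.adj_comm, Sym2.eq_swap]

end SimpleGraph

section SteinerDistance

variable [Fintype V] {G : SimpleGraph V}

theorem steinerDist_le_sdiam {S : Finset V} {k : ℕ} (hS : S.card = k) :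
    steinerDist G S ≤ sdiam G k :=
  Finset.le_sup (Finset.mem_powersetCard_univ.mpr hS)

theorem SimpleGraph.Connected.exists_subgraph_ncard_edgeSet_eq_steinerDist (hG : G.Connected)
    (S : Finset V) :
    ∃ H : G.Subgraph, H.Connected ∧ ↑S ⊆ H.verts ∧ H.edgeSet.ncard = steinerDist G S := by
  apply Nat.sInf_mem
    (s := {m | ∃ H : G.Subgraph, H.Connected ∧ ↑S ⊆ H.verts ∧ H.edgeSet.ncard = m})
  exact ⟨_, _, hG.toSubgraph le_rfl, by simp, rfl⟩

end SteinerDistance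

theorem stmt_8_general [Fintype V] (G : SimpleGraph V)
    (hG : G.Connected) (h : sdiam G 4 = 3) :
    ¬ ∃ u₁ u₂ u₃ u₄ : V, u₁ ≠ u₂ ∧ u₁ ≠ u₃ ∧ u₁ ≠ u₄ ∧ u₂ ≠ u₃ ∧ u₂ ≠ u₄ ∧ u₃ ≠ u₄ ∧
      ¬ G.Adj u₁ u₂ ∧ ¬ G.Adj u₂ u₃ ∧ ¬ G.Adj u₃ u₄ ∧ ¬ G.Adj u₄ u₁ := by
  classical
  rintro ⟨u₁, u₂, u₃, u₄, h₁₂, h₁₃, h₁₄, h₂₃, h₂₄, h₃₄, n₁₂, n₂₃, n₃₄, n₄₁⟩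
  set S : Finset V := {u₁, u₂, u₃, u₄}
  have hS : S.card = 4 := by simp [S, *]
  obtain ⟨H, hHc, hSH, hH⟩ := hG.exists_subgraph_ncard_edgeSet_eq_steinerDist S
  have hH3 : H.edgeSet.ncard ≤ 3 := hH ▸ h ▸ steinerDist_le_sdiam hS
  have hverts : H.verts = S := hHc.verts_eq_of_ncard_edgeSet_lt hSH (by omega)
  have hedges := H.edgeSet_subset_of_verts_subset_of_not_adj (by simp [hverts, S]) n₁₂ n₂₃ n₃₄ n₄₁
  have h2 : H.edgeSet.ncard ≤ 2 := calc
    H.edgeSet.ncard ≤ ({s(u₁, u₃), s(u₂, u₄)} : Set (Sym2 V)).ncard := Set.ncard_le_ncard hedges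
    _ ≤ ({s(u₂, u₄)} : Set (Sym2 V)).ncard + 1 := Set.ncard_insert_le _ _
    _ = 2 := by rw [Set.ncard_singleton]
  have h4 := hHc.ncard_verts_le_ncard_edgeSet_add_one_s8
  rw [hverts, Set.ncard_coe_finset] at h4
  omega

theorem stmt_8 [Fintype V] (G : SimpleGraph V)
    (hn : 5 ≤ Fintype.card V) (hG : G.Connected) (h : sdiam G 4 = 3) :
    ¬ ∃ u₁ u₂ u₃ u₄ : V, u₁ ≠ u₂ ∧ u₁ ≠ u₃ ∧ u₁ ≠ u₄ ∧ u₂ ≠ u₃ ∧ u₂ ≠ u₄ ∧ u₃ ≠ u₄ ∧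
      ¬ G.Adj u₁ u₂ ∧ ¬ G.Adj u₂ u₃ ∧ ¬ G.Adj u₃ u₄ ∧ ¬ G.Adj u₄ u₁ :=
  stmt_8_general G hG h
end

section
/- Let G be a connected simple graph on n ≥ 5 vertices with at most 4 non-cut vertices. If G contains a cycle of length at least 5, then a contradiction follows; equivalently, if sdiam_4(G) = n-1 and G is not a tree, then the circumference of G is 3 or 4. -/
open SimpleGraph

variable {V : Type*}

/-!
For every vertex `v` of the cycle we find a non-cut vertex `x` that cannot reach the rest of the
cycle without passing through `v`: either `v` itself, or, when `v` is a cut vertex, a vertex of a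
component of `G - v` missing the cycle that is farthest from `v` (a vertex with no neighbour
farther from `v` is never a cut vertex). Two cycle vertices `a ≠ b` cannot share such an `x`,
since a path from `x` to `a` either avoids `b` or reaches `b` before `a`. Hence a cycle of length
`c` yields `c` distinct non-cut vertices.
-/

namespace SimpleGraph

variable {G : SimpleGraph V}

def ReachableAvoiding (G : SimpleGraph V) (v x y : V) : Prop :=
  ∃ p : G.Walk x y, v ∉ p.support

namespace ReachableAvoiding

variable {v x y z : V}

lemma refl (hx : x ≠ v) : G.ReachableAvoiding v x x :=
  ⟨.nil, by simpa using hx.symm⟩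

lemma ne_left (h : G.ReachableAvoiding v x y) : x ≠ v := by
  obtain ⟨p, hp⟩ := h
  rintro rfl
  exact hp p.start_mem_support

lemma symm (h : G.ReachableAvoiding v x y) : G.ReachableAvoiding v y x := by
  obtain ⟨p, hp⟩ := h
  exact ⟨p.reverse, by simpa using hp⟩

lemma trans (hxy : G.ReachableAvoiding v x y) (hyz : G.ReachableAvoiding v y z) :
    G.ReachableAvoiding v x z := by
  obtain ⟨p, hp⟩ := hxy
  obtain ⟨q, hq⟩ := hyz
  exact ⟨p.append q, by simp [Walk.mem_support_append_iff, hp, hq]⟩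

lemma cons (hxy : G.Adj x y) (hx : x ≠ v) (h : G.ReachableAvoiding v y z) :
    G.ReachableAvoiding v x z := by
  obtain ⟨p, hp⟩ := h
  exact ⟨.cons hxy p, by simp [hp, hx.symm]⟩

end ReachableAvoiding

lemma Reachable.reachableAvoiding_or {x a b : V} (h : G.Reachable x a) (hab : a ≠ b) :
    G.ReachableAvoiding b x a ∨ G.ReachableAvoiding a x b := by
  classical
  obtain ⟨p, hp⟩ := h.exists_isPath
  by_cases hb : b ∈ p.support
  · exact .inr ⟨p.takeUntil b hb, Walk.endpoint_notMem_support_takeUntil hp hb hab⟩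
  · exact .inl ⟨p, hb⟩

lemma mem_noncutVerts_of_forall_reachableAvoiding {v w : V} (hw : w ≠ v)
    (h : ∀ x, x ≠ v → G.ReachableAvoiding v x w) : v ∈ noncutVerts G := by
  refine (connected_iff_exists_forall_reachable _).2 ⟨⟨w, hw⟩, fun ⟨x, hx⟩ => ?_⟩
  obtain ⟨p, hp⟩ := (h x hx).symm
  exact ⟨p.induce _ fun z hz (hzv : z = v) => hp (hzv ▸ hz)⟩

lemma Connected.mem_noncutVerts_of_forall_adj_dist_le (hG : G.Connected) {v x : V}
    (hxv : x ≠ v) (h : ∀ y, G.Adj x y → G.dist y v ≤ G.dist x v) : x ∈ noncutVerts G := by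
  refine mem_noncutVerts_of_forall_reachableAvoiding hxv.symm fun y hyx => ?_
  induction hd : G.dist y v using Nat.strong_induction_on generalizing y with
  | _ n ih =>
    obtain ⟨p, hp⟩ := (hG y v).exists_walk_length_eq_dist
    cases p with
    | nil => exact .refl hxv.symm
    | @cons _ z _ hyz q =>
      rw [Walk.length_cons] at hp
      have hzv : G.dist z v ≤ q.length := dist_le q
      have hzx : z ≠ x := by
        rintro rfl
        have := h y hyz.symm
        omega
      exact (ih _ (by omega) z hzx rfl).cons hyz hyx

lemma Connected.exists_mem_noncutVerts_not_reachableAvoiding [Finite V] (hG : G.Connected)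
    {v w : V} (h : ∃ x, x ≠ v ∧ ¬ G.ReachableAvoiding v x w) :
    ∃ x ∈ noncutVerts G, ¬ G.ReachableAvoiding v x w := by
  obtain ⟨x, ⟨hxv, hxw⟩, hmax⟩ :=
    Set.exists_max_image {x | x ≠ v ∧ ¬ G.ReachableAvoiding v x w} (G.dist · v)
      (Set.toFinite _) h
  refine ⟨x, hG.mem_noncutVerts_of_forall_adj_dist_le hxv fun y hxy => ?_, hxw⟩
  by_contra! hlt
  have hyv : y ≠ v := by
    rintro rfl
    simp at hlt
  exact (hmax y ⟨hyv, fun hyw => hxw (hyw.cons hxy hxv)⟩).not_gt hlt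

lemma Connected.exists_mem_noncutVerts_forall_not_reachableAvoiding [Finite V]
    (hG : G.Connected) {v w : V} (hw : w ≠ v) :
    ∃ x ∈ noncutVerts G, ∀ y, G.ReachableAvoiding v y w → ¬ G.ReachableAvoiding v x y := by
  by_cases hv : v ∈ noncutVerts G
  · exact ⟨v, hv, fun _ _ hvy => hvy.ne_left rfl⟩
  have hcut : ∃ x, x ≠ v ∧ ¬ G.ReachableAvoiding v x w := by
    by_contra! h
    exact hv (mem_noncutVerts_of_forall_reachableAvoiding hw h)
  obtain ⟨x, hx, hxw⟩ := hG.exists_mem_noncutVerts_not_reachableAvoiding hcut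
  exact ⟨x, hx, fun _ hyw hxy => hxw (hxy.trans hyw)⟩

lemma Connected.card_le_ncard_noncutVerts [Finite V] (hG : G.Connected) (S : Finset V)
    (hS : ∀ v ∈ S, ∃ w ∈ S, w ≠ v ∧ ∀ x ∈ S, x ≠ v → G.ReachableAvoiding v x w) :
    S.card ≤ (noncutVerts G).ncard := by
  classical
  have hwit : ∀ v ∈ S, ∃ x ∈ noncutVerts G,
      ∀ c ∈ S, c ≠ v → ¬ G.ReachableAvoiding v x c := by
    intro v hv
    obtain ⟨w, -, hwv, hSw⟩ := hS v hv
    obtain ⟨x, hx, hxw⟩ := hG.exists_mem_noncutVerts_forall_not_reachableAvoiding hwv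
    exact ⟨x, hx, fun c hc hcv => hxw c (hSw c hc hcv)⟩
  choose! f hf hsep using hwit
  have hinj : Set.InjOn f S := by
    intro a ha b hb hab
    by_contra hne
    rcases (hG (f a) a).reachableAvoiding_or hne with h | h
    · exact hsep b hb a ha hne (hab ▸ h)
    · exact hsep a ha b hb (Ne.symm hne) h
  calc S.card = (S.image f).card := (Finset.card_image_of_injOn hinj).symm
    _ = ((S.image f : Finset V) : Set V).ncard := (Set.ncard_coe_finset _).symm
    _ ≤ (noncutVerts G).ncard := Set.ncard_le_ncard (by simpa [Set.subset_def] using hf) (Set.toFinite _)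

namespace Walk.IsCycle

variable {u : V} {W : G.Walk u u}

lemma card_support_toFinset [DecidableEq V] (hW : W.IsCycle) :
    W.support.toFinset.card = W.length := by
  have hu : u ∈ W.support.tail := W.end_mem_tail_support hW.not_nil
  rw [← W.cons_tail_support, List.toFinset_cons, Finset.insert_eq_of_mem (List.mem_toFinset.2 hu),
    List.toFinset_card_of_nodup hW.support_nodup, List.length_tail, Walk.length_support, Nat.add_sub_cancel]

lemma exists_forall_reachableAvoiding [DecidableEq V] (hW : W.IsCycle) {v : V}
    (hv : v ∈ W.support) :
    ∃ w ∈ W.support, w ≠ v ∧ ∀ x ∈ W.support, x ≠ v → G.ReachableAvoiding v x w := by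
  obtain ⟨w, hvw, q, hq⟩ := Walk.not_nil_iff.mp (hW.rotate hv).not_nil
  have hq_path : q.IsPath := ((Walk.cons_isCycle_iff q hvw).1 (hq ▸ hW.rotate hv)).1
  have hmem : ∀ x, x ∈ W.support ↔ x = v ∨ x ∈ q.support := fun x => by
    rw [← W.mem_support_rotate_iff v hv, hq, Walk.support_cons, List.mem_cons]
  refine ⟨w, (hmem w).2 (.inr q.start_mem_support), hvw.ne', fun x hx hxv => ?_⟩
  have hxq : x ∈ q.support := ((hmem x).1 hx).resolve_left hxv
  exact ReachableAvoiding.symm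
    ⟨q.takeUntil x hxq, Walk.endpoint_notMem_support_takeUntil hq_path hxq (Ne.symm hxv)⟩

end Walk.IsCycle

end SimpleGraph

theorem stmt_14_general [Fintype V] (G : SimpleGraph V)
    (hG : G.Connected)
    (hnc : (noncutVerts G).ncard ≤ 4)
    (u : V) (W : G.Walk u u) (hW : W.IsCycle) (hlen : 5 ≤ W.length) :
    False := by
  classical
  have hcard := hG.card_le_ncard_noncutVerts W.support.toFinset fun v hv => by
    simpa using hW.exists_forall_reachableAvoiding (List.mem_toFinset.mp hv)
  rw [hW.card_support_toFinset] at hcard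
  omega

theorem stmt_14 [Fintype V] (G : SimpleGraph V)
    (hn : 5 ≤ Fintype.card V) (hG : G.Connected)
    (hnc : (noncutVerts G).ncard ≤ 4)
    (u : V) (W : G.Walk u u) (hW : W.IsCycle) (hlen : 5 ≤ W.length) :
    False :=
  stmt_14_general G hG hnc u W hW hlen
end
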